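/- Sufficient decrease of proximal gradient: let h : ℝⁿ → ℝ be differentiable with L-Lipschitz gradient, r : ℝⁿ → ℝ convex, and set x⁺ = prox_{(1/L)·r}(x − (1/L)∇h(x)). Then h(x⁺) + r(x⁺) ≤ h(x) + r(x) − (L/2)‖x⁺ − x‖². -/

import Mathlib

/-!
The descent lemma gives `h x⁺ ≤ h x + ⟪∇h x, x⁺ - x⟫ + L/2 ‖x⁺ - x‖²`. The prox objective
`z ↦ ½‖x - ∇h x / L - z‖² + r z / L` is `1`-strongly convex, so it exceeds its minimum `x⁺` by at
least `½‖z - x⁺‖²`; evaluated at `z = x` this reads `r x⁺ ≤ r x - ⟪∇h x, x⁺ - x⟫ - L ‖x⁺ - x‖²`.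
Adding the two inequalities, the linear terms cancel.
-/

open Set Filter Topology
open scoped RealInnerProductSpace

section StrongConvexity

variable {E : Type*} [NormedAddCommGroup E] [NormedSpace ℝ E]

/-- Compare the minimum with the value at `(1 - t) • p + t • y` and let `t → 0⁺`. -/
theorem StrongConvexOn.add_le_of_isMinOn {s : Set E} {m : ℝ} {f : E → ℝ}
    (hf : StrongConvexOn s m f) {p : E} (hp : IsMinOn f s p) (hps : p ∈ s) {y : E} (hy : y ∈ s) :
    f p + m / 2 * ‖y - p‖ ^ 2 ≤ f y := by
  have hsegment : ∀ t ∈ Ioo (0 : ℝ) 1, f p + (1 - t) * (m / 2 * ‖y - p‖ ^ 2) ≤ f y := by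
    intro t ⟨ht₀, ht₁⟩
    have hmin := isMinOn_iff.1 hp _ (hf.1 hps hy (sub_nonneg.2 ht₁.le) ht₀.le (sub_add_cancel 1 t))
    have hconv := hf.2 hps hy (sub_nonneg.2 ht₁.le) ht₀.le (sub_add_cancel 1 t)
    simp only [smul_eq_mul, norm_sub_rev p y] at hmin hconv
    nlinarith
  have hlim : Tendsto (fun t : ℝ => f p + (1 - t) * (m / 2 * ‖y - p‖ ^ 2)) (𝓝[>] 0)
      (𝓝 (f p + m / 2 * ‖y - p‖ ^ 2)) := by
    have : Continuous fun t : ℝ => f p + (1 - t) * (m / 2 * ‖y - p‖ ^ 2) := by fun_prop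
    simpa using this.continuousWithinAt.tendsto (x := 0) (s := Ioi 0)
  exact le_of_tendsto hlim (eventually_of_mem (Ioo_mem_nhdsGT one_pos) hsegment)

end StrongConvexity

section InnerProduct

variable {E : Type*} [NormedAddCommGroup E] [InnerProductSpace ℝ E]

theorem ConvexOn.strongConvexOn_half_sq_norm_sub_add {f : E → ℝ} (hf : ConvexOn ℝ univ f)
    (v : E) : StrongConvexOn univ 1 (fun z => 1 / 2 * ‖v - z‖ ^ 2 + f z) := by
  rw [strongConvexOn_iff_convex]
  have hlinear : ConvexOn ℝ univ fun z : E => 1 / 2 * ‖v‖ ^ 2 - ⟪v, z⟫ :=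
    ((convexOn_const (1 / 2 * ‖v‖ ^ 2) convex_univ).add ((-innerₛₗ ℝ v).convexOn convex_univ)).congr
      fun z _ => by simp [sub_eq_add_neg]
  refine (hlinear.add hf).congr fun z _ => ?_
  simp only [Pi.add_apply]
  rw [norm_sub_sq_real]
  ring

theorem apply_le_of_isMinOn_prox_gradient_step {r : E → ℝ} (hr : ConvexOn ℝ univ r) {L : ℝ}
    (hL : 0 < L) {x g xplus : E}
    (hprox : IsMinOn (fun z => 1 / 2 * ‖(x - (1 / L) • g) - z‖ ^ 2 + 1 / L * r z) univ xplus) :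
    r xplus ≤ r x - ⟪g, xplus - x⟫ - L * ‖xplus - x‖ ^ 2 := by
  have hgrowth := ((hr.smul (one_div_pos.2 hL).le).strongConvexOn_half_sq_norm_sub_add
    (x - (1 / L) • g)).add_le_of_isMinOn hprox (mem_univ xplus) (mem_univ x)
  have hexpand : ‖x - (1 / L) • g - xplus‖ ^ 2
      = ‖xplus - x‖ ^ 2 + 2 / L * ⟪g, xplus - x⟫ + ‖(1 / L) • g‖ ^ 2 := by
    rw [show x - (1 / L) • g - xplus = -((xplus - x) + (1 / L) • g) by abel, norm_neg,
      norm_add_sq_real, real_inner_smul_right, real_inner_comm]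
    ring
  simp only [smul_eq_mul, sub_sub_cancel_left, norm_neg, norm_sub_rev x xplus, hexpand] at hgrowth
  field_simp at hgrowth
  linarith

variable [CompleteSpace E]

/-- `t ↦ h (x + t • d) - t ⟪h' x, d⟫ - L/2 t² ‖d‖²` is antitone on `t ≥ 0`, by the Lipschitz bound
on its derivative; compare `t = 0` with `t = 1`. -/
theorem le_add_inner_add_of_lipschitz_gradient {h : E → ℝ} {h' : E → E} {L : ℝ}
    (hdiff : ∀ x, HasGradientAt h (h' x) x) (hlip : ∀ x₁ x₂, ‖h' x₁ - h' x₂‖ ≤ L * ‖x₁ - x₂‖)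
    (x y : E) : h y ≤ h x + ⟪h' x, y - x⟫ + L / 2 * ‖y - x‖ ^ 2 := by
  set d := y - x
  set φ : ℝ → ℝ := fun t => h (x + t • d) - t * ⟪h' x, d⟫ - L / 2 * t ^ 2 * ‖d‖ ^ 2
  have hderiv : ∀ t : ℝ, HasDerivAt φ
      (⟪h' (x + t • d), d⟫ - ⟪h' x, d⟫ - L * t * ‖d‖ ^ 2) t := by
    intro t
    have hline : HasDerivAt (fun t : ℝ => x + t • d) d t := by
      simpa using ((hasDerivAt_id t).smul_const d).const_add x
    have hcomp := (hdiff (x + t • d)).hasFDerivAt.comp_hasDerivAt t hline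
    simp only [InnerProductSpace.toDual_apply_apply] at hcomp
    exact ((hcomp.sub ((hasDerivAt_id t).mul_const ⟪h' x, d⟫)).sub
      (((hasDerivAt_pow 2 t).const_mul (L / 2)).mul_const (‖d‖ ^ 2))).congr_deriv
      (by push_cast; ring)
  have hslope : ∀ t ∈ interior (Ici (0 : ℝ)),
      ⟪h' (x + t • d), d⟫ - ⟪h' x, d⟫ - L * t * ‖d‖ ^ 2 ≤ 0 := by
    intro t ht
    rw [interior_Ici, mem_Ioi] at ht
    rw [sub_nonpos]
    calc ⟪h' (x + t • d), d⟫ - ⟪h' x, d⟫ = ⟪h' (x + t • d) - h' x, d⟫ := (inner_sub_left ..).symm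
      _ ≤ ‖h' (x + t • d) - h' x‖ * ‖d‖ := real_inner_le_norm _ _
      _ ≤ L * ‖(x + t • d) - x‖ * ‖d‖ := by gcongr; exact hlip _ _
      _ = L * t * ‖d‖ ^ 2 := by rw [add_sub_cancel_left, norm_smul, Real.norm_of_nonneg ht.le]; ring
  have hanti : AntitoneOn φ (Ici 0) :=
    antitoneOn_of_hasDerivWithinAt_nonpos (convex_Ici 0)
      (fun t _ => (hderiv t).continuousAt.continuousWithinAt)
      (fun t _ => (hderiv t).hasDerivWithinAt) hslope
  have hφ := hanti (mem_Ici.2 le_rfl) (mem_Ici.2 zero_le_one) zero_le_one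
  simp only [φ, one_smul, zero_smul, add_zero, add_sub_cancel, d] at hφ
  linarith

end InnerProduct

theorem stmt_5 (n : ℕ) (h r : EuclideanSpace ℝ (Fin n) → ℝ)
    (h' : EuclideanSpace ℝ (Fin n) → EuclideanSpace ℝ (Fin n))
    (L : ℝ) (hL : 0 < L)
    (hdiff : ∀ x, HasGradientAt h (h' x) x)
    (hlip : ∀ x₁ x₂, ‖h' x₁ - h' x₂‖ ≤ L * ‖x₁ - x₂‖)
    (hr : ConvexOn ℝ univ r)
    (x xplus : EuclideanSpace ℝ (Fin n))
    (hprox : IsMinOn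
      (fun z => (1 / 2 : ℝ) * ‖(x - (1 / L) • h' x) - z‖ ^ 2 + (1 / L) * r z)
      univ xplus) :
    h xplus + r xplus ≤ h x + r x - (L / 2) * ‖xplus - x‖ ^ 2 := by
  have hdescent := le_add_inner_add_of_lipschitz_gradient hdiff hlip x xplus
  have hprox_step := apply_le_of_isMinOn_prox_gradient_step hr hL hprox
  linarith
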